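/- arXiv:1805.11732 — 2 statements merged into one kernel-verified Lean document; each statement's English description precedes it below -/
import Mathlib

section
/- Let X ⊆ ℝ^m and Y ⊆ ℝ^n be nonempty compact convex sets, A a q×n and B a q×m real matrix, b ∈ ℝ^q, f : ℝ^n × ℝ^m → ℝ ∪ {+∞} proper convex lower semicontinuous, and g : ℝ^n × ℝ^m → ℝ^p with each component convex and lower semicontinuous; assume f and g are differentiable on Y × X. Define 𝒬(x) = inf { f(y, x) : y ∈ Y, Ay + Bx = b, g(y, x) ≤ 0 } for x ∈ X. Fix x̄ ∈ X with nonempty feasible set, and assume there exists y₀ in the relative interior of Y and in the relative interior of {y : g(y, x̄) ≤ 0} with Ay₀ + Bx̄ = b. Let (λ̄, μ̄), with μ̄ ≥ 0, be an optimal solution of the dual problem sup_{λ ∈ ℝ^q, μ ≥ 0} θ_{x̄}(λ, μ), where θ_{x̄}(λ, μ) = inf_{y ∈ Y} { f(y, x̄) + λᵀ(Ay + Bx̄ − b) + μᵀ g(y, x̄) }, and let ȳ ∈ Y be an optimal solution of the problem defining 𝒬(x̄). Set s(x̄) = ∇_x f(ȳ, x̄) + Bᵀλ̄ + Σ_{i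 ∈ I(ȳ, x̄)} μ̄_i ∇_x g_i(ȳ, x̄), where I(ȳ, x̄) = { i : g_i(ȳ, x̄) = 0 }. Then s(x̄) is a subgradient of 𝒬 at x̄, i.e., 𝒬(x) ≥ 𝒬(x̄) + ⟨s(x̄), x − x̄⟩ for all x ∈ X. -/
/-!
There is no duality gap at `x̄`: `Y` is compact and `f(·, x̄)`, `g(·, x̄)` are continuous on `Y`
(being differentiable there), so the image set
`{(Ay + Bx̄ − b, w, t) | y ∈ Y, g(y, x̄) ≤ w, f(y, x̄) ≤ t}` is closed and convex, and separating
`(0, 0, r)` from it for `r < 𝒬(x̄)` gives a non-vertical hyperplane, i.e. multipliers with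
`θ ≥ r`. Hence `θ(λ̄, μ̄) = 𝒬(x̄) = f(ȳ, x̄)`, which forces complementary slackness and makes `ȳ` a
minimiser of the Lagrangian `L(·, x̄)` over `Y`. As `L` is jointly convex on `Y × X`, its gradient
inequality at `(ȳ, x̄)`, whose `y`-part is nonnegative by minimality, gives
`f(y, x) ≥ L(y, x) ≥ 𝒬(x̄) + ⟨∇ₓL(ȳ, x̄), x − x̄⟩` for every feasible `(y, x)`, and
`∇ₓL(ȳ, x̄) = s(x̄)` because `μ̄ᵢ = 0` off the active set.
-/

open scoped RealInnerProductSpace Matrix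
noncomputable section

/-- `ℝ^k` with the Euclidean norm. -/
abbrev E (k : ℕ) := EuclideanSpace ℝ (Fin k)

/-- Reinterpret a plain vector of `ℝ^k` as an element of Euclidean space. -/
def toE {k : ℕ} (v : Fin k → ℝ) : E k := WithLp.toLp 2 v

/-- Convexity for extended-real-valued functions on a real vector space. -/
def EConvexOn {V : Type*} [AddCommGroup V] [Module ℝ V] (f : V → EReal) : Prop :=
  ∀ x y : V, ∀ t ∈ Set.Ioo (0:ℝ) 1,
    f (t • x + (1 - t) • y) ≤ (t : EReal) * f x + ((1 - t : ℝ) : EReal) * f y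

/-- The value function `𝒬(x) = inf { f(y, x) : y ∈ Y, Ay + Bx = b, g(y, x) ≤ 0 }`. -/
def Qvar {n m q p : ℕ} (Y : Set (E n)) (A : Matrix (Fin q) (Fin n) ℝ)
    (B : Matrix (Fin q) (Fin m) ℝ) (b : Fin q → ℝ)
    (f : E n × E m → EReal) (g : Fin p → E n × E m → EReal) (x : E m) : EReal :=
  ⨅ (y : E n) (_ : y ∈ Y) (_ : A.mulVec y + B.mulVec x = b)
    (_ : ∀ i, g i (y, x) ≤ (0 : EReal)), f (y, x)

/-- The dual function `θ_x(λ, μ) = inf_{y ∈ Y} { f(y,x) + λᵀ(Ay + Bx − b) + μᵀg(y,x) }`. -/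
def thetaVar {n m q p : ℕ} (Y : Set (E n)) (A : Matrix (Fin q) (Fin n) ℝ)
    (B : Matrix (Fin q) (Fin m) ℝ) (b : Fin q → ℝ)
    (f : E n × E m → EReal) (g : Fin p → E n × E m → EReal)
    (x : E m) (lam : E q) (mu : E p) : EReal :=
  ⨅ (y : E n) (_ : y ∈ Y),
    (f (y, x) + (((lam : Fin q → ℝ) ⬝ᵥ (A.mulVec y + B.mulVec x - b) : ℝ) : EReal)
      + ∑ i, (mu i : EReal) * g i (y, x))

open Set

theorem EReal.coe_finset_sum {ι : Type*} (s : Finset ι) (h : ι → ℝ) :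
    ((∑ i ∈ s, h i : ℝ) : EReal) = ∑ i ∈ s, (h i : EReal) :=
  map_sum (⟨⟨Real.toEReal, EReal.coe_zero⟩, EReal.coe_add⟩ : ℝ →+ EReal) h s

theorem EConvexOn.convexOn_of_eqOn {V : Type*} [AddCommGroup V] [Module ℝ V] {f : V → EReal}
    (hf : EConvexOn f) {S : Set V} (hS : Convex ℝ S) {fr : V → ℝ}
    (hfr : ∀ z ∈ S, f z = fr z) : ConvexOn ℝ S fr := by
  refine ⟨hS, fun z hz w hw a c ha hc hac => ?_⟩
  rcases ha.eq_or_lt with rfl | ha'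
  · simp [(zero_add c).symm.trans hac]
  rcases hc.eq_or_lt with rfl | hc'
  · simp [(add_zero a).symm.trans hac]
  have h := hf z w a ⟨ha', by linarith⟩
  rw [show 1 - a = c by linarith, hfr _ (hS hz hw ha hc hac), hfr z hz, hfr w hw] at h
  exact_mod_cast h

theorem ConvexOn.comp_prodMk_const {V W : Type*} [AddCommGroup V] [Module ℝ V] [AddCommGroup W]
    [Module ℝ W] {Y : Set V} {X : Set W} {F : V × W → ℝ} (hF : ConvexOn ℝ (Y ×ˢ X) F)
    (hY : Convex ℝ Y) {x : W} (hx : x ∈ X) : ConvexOn ℝ Y (fun y => F (y, x)) := by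
  refine ⟨hY, fun y₁ hy₁ y₂ hy₂ a c ha hc hac => ?_⟩
  have := hF.2 (x := (y₁, x)) (y := (y₂, x)) ⟨hy₁, hx⟩ ⟨hy₂, hx⟩ ha hc hac
  rwa [Prod.smul_mk, Prod.smul_mk, Prod.mk_add_mk, Convex.combo_self hac] at this

section FirstOrder

variable {V W : Type*} [NormedAddCommGroup V] [NormedSpace ℝ V]
  [NormedAddCommGroup W] [NormedSpace ℝ W]

theorem ConvexOn.add_fderiv_sub_le {S : Set V} {F : V → ℝ} {F' : V →L[ℝ] ℝ}
    (hF : ConvexOn ℝ S F) {z w : V} (hz : z ∈ S) (hw : w ∈ S) (hF' : HasFDerivAt F F' z) :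
    F z + F' (w - z) ≤ F w := by
  have hline : ConvexOn ℝ (AffineMap.lineMap (k := ℝ) z w ⁻¹' S)
      (F ∘ AffineMap.lineMap (k := ℝ) z w) :=
    hF.comp_affineMap _
  have hderiv : HasDerivAt (F ∘ AffineMap.lineMap (k := ℝ) z w) (F' (w - z)) 0 := by
    have hF'' : HasFDerivAt F F' (AffineMap.lineMap z w (0 : ℝ)) := by simpa using hF'
    exact hF''.comp_hasDerivAt (0 : ℝ) AffineMap.hasDerivAt_lineMap
  have h := hline.le_slope_of_hasDerivAt (by simpa using hz) (by simpa using hw) one_pos hderiv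
  simp only [slope, Function.comp_apply, AffineMap.lineMap_apply_zero,
    AffineMap.lineMap_apply_one, sub_zero, inv_one, one_smul, vsub_eq_sub] at h
  linarith

theorem IsMinOn.fderiv_sub_nonneg {S : Set V} {F : V → ℝ} {F' : V →L[ℝ] ℝ} {z w : V}
    (hmin : IsMinOn F S z) (hS : Convex ℝ S) (hz : z ∈ S) (hw : w ∈ S)
    (hF' : HasFDerivAt F F' z) : 0 ≤ F' (w - z) :=
  hmin.localize.hasFDerivWithinAt_nonneg hF'.hasFDerivWithinAt
    (sub_mem_posTangentConeAt_of_segment_subset (hS.segment_subset hz hw))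

/-- If `L` is jointly convex and `y₀` minimises `L (·, x₀)`, the partial derivative in `x` at
`(y₀, x₀)` is a subgradient of `x ↦ inf_y L (y, x)`. -/
theorem ConvexOn.add_fderiv_snd_le_of_isMinOn {Y : Set V} {X : Set W} {L : V × W → ℝ}
    (hY : Convex ℝ Y) (hL : ConvexOn ℝ (Y ×ˢ X) L) {y₀ : V} {x₀ : W} (hy₀ : y₀ ∈ Y)
    (hx₀ : x₀ ∈ X) (hmin : IsMinOn (fun y => L (y, x₀)) Y y₀)
    (hd : DifferentiableAt ℝ L (y₀, x₀)) {y : V} {x : W} (hy : y ∈ Y) (hx : x ∈ X) :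
    L (y₀, x₀) + fderiv ℝ (fun x' => L (y₀, x')) x₀ (x - x₀) ≤ L (y, x) := by
  set D := fderiv ℝ L (y₀, x₀)
  have hD : HasFDerivAt L D (y₀, x₀) := hd.hasFDerivAt
  have hpartial : fderiv ℝ (fun x' => L (y₀, x')) x₀ (x - x₀) = D (0, x - x₀) :=
    congrArg (· (x - x₀)) (hD.comp x₀ (hasFDerivAt_prodMk_right y₀ x₀)).fderiv
  have hdir : 0 ≤ D (y - y₀, 0) := by
    have hmin' : IsMinOn L (Y ×ˢ {x₀}) (y₀, x₀) := by
      rintro ⟨y', x'⟩ ⟨hy', rfl⟩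
      exact hmin hy'
    simpa using hmin'.fderiv_sub_nonneg (w := (y, x₀)) (hY.prod (convex_singleton x₀))
      ⟨hy₀, rfl⟩ ⟨hy, rfl⟩ hD
  have hsplit : D ((y, x) - (y₀, x₀)) = D (y - y₀, 0) + D (0, x - x₀) := by
    rw [← map_add]
    simp
  have := hL.add_fderiv_sub_le (w := (y, x)) ⟨hy₀, hx₀⟩ ⟨hy, hx⟩ hD
  linarith

end FirstOrder

theorem nonneg_of_forall_lt_add_mul {a b u : ℝ} (h : ∀ τ : ℝ, 0 ≤ τ → u < a + τ * b) : 0 ≤ b := by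
  by_contra! hb
  have hua : u < a := by simpa using h 0 le_rfl
  have := h ((a - u) / -b) (div_nonneg (by linarith) (by linarith))
  rw [div_mul_eq_mul_div, div_neg, mul_div_assoc, div_self hb.ne, mul_one] at this
  linarith

theorem StrongDual.apply_eq_dotProduct_add {ι κ : Type*} [Fintype ι] [Fintype κ] [DecidableEq ι]
    [DecidableEq κ] (ψ : StrongDual ℝ ((ι → ℝ) × (κ → ℝ) × ℝ)) (u : ι → ℝ) (w : κ → ℝ) (t : ℝ) :
    ψ (u, w, t) = (fun i => ψ (Pi.single i 1, 0, 0)) ⬝ᵥ u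
      + ∑ i, ψ (0, Pi.single i 1, 0) * w i + ψ (0, 0, 1) * t := by
  have : ((u, w, t) : (ι → ℝ) × (κ → ℝ) × ℝ) =
      ∑ i, u i • (Pi.single i 1, 0, 0) + ∑ i, w i • (0, Pi.single i 1, 0) + t • (0, 0, 1) := by
    ext <;> simp [Prod.fst_sum, Prod.snd_sum, Finset.sum_apply, Pi.single_apply]
  rw [this]
  simp only [map_add, map_sum, map_smul, smul_eq_mul, dotProduct, mul_comm]

section LagrangeDuality

variable {V ι κ : Type*}

def constraintImage (Y : Set V) (h : V → ι → ℝ) (G : κ → V → ℝ) (F : V → ℝ) :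
    Set ((ι → ℝ) × (κ → ℝ) × ℝ) :=
  {z | ∃ y ∈ Y, h y = z.1 ∧ (∀ i, G i y ≤ z.2.1 i) ∧ F y ≤ z.2.2}

theorem convex_constraintImage [AddCommGroup V] [Module ℝ V] [TopologicalSpace V] {Y : Set V}
    (hY : Convex ℝ Y) (A : V →L[ℝ] ι → ℝ) (c : ι → ℝ)
    {G : κ → V → ℝ} (hG : ∀ i, ConvexOn ℝ Y (G i)) {F : V → ℝ} (hF : ConvexOn ℝ Y F) :
    Convex ℝ (constraintImage Y (fun y => A y - c) G F) := by
  rintro z₁ ⟨y₁, hy₁, hA₁, hG₁, hF₁⟩ z₂ ⟨y₂, hy₂, hA₂, hG₂, hF₂⟩ a b ha hb hab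
  refine ⟨a • y₁ + b • y₂, hY hy₁ hy₂ ha hb hab, ?_, fun i => ?_, ?_⟩
  · rw [Prod.fst_add, Prod.smul_fst, Prod.smul_fst, ← hA₁, ← hA₂]
    simp only [map_add, map_smul]
    linear_combination (norm := module) hab • c
  · exact ((hG i).2 hy₁ hy₂ ha hb hab).trans
      (add_le_add (smul_le_smul_of_nonneg_left (hG₁ i) ha) (smul_le_smul_of_nonneg_left (hG₂ i) hb))
  · exact (hF.2 hy₁ hy₂ ha hb hab).trans
      (add_le_add (smul_le_smul_of_nonneg_left hF₁ ha) (smul_le_smul_of_nonneg_left hF₂ hb))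

theorem isClosed_constraintImage [TopologicalSpace V] {Y : Set V} (hY : IsCompact Y)
    {h : V → ι → ℝ} (hh : ContinuousOn h Y) {G : κ → V → ℝ} (hG : ∀ i, ContinuousOn (G i) Y)
    {F : V → ℝ} (hF : ContinuousOn F Y) : IsClosed (constraintImage Y h G F) := by
  have hK : IsCompact ((fun y => (h y, fun i => G i y, F y)) '' Y) :=
    hY.image_of_continuousOn (hh.prodMk ((continuousOn_pi.2 hG).prodMk hF))
  have hcone : IsClosed ({0} ×ˢ (Ici 0 ×ˢ Ici 0) : Set ((ι → ℝ) × (κ → ℝ) × ℝ)) :=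
    isClosed_singleton.prod (isClosed_Ici.prod isClosed_Ici)
  convert hcone.add_left_of_isCompact hK using 1
  ext ⟨u, w, t⟩
  constructor
  · rintro ⟨y, hy, rfl, hGw, hFt⟩
    exact ⟨_, ⟨y, hy, rfl⟩, (0, w - fun i => G i y, t - F y),
      ⟨rfl, fun i => sub_nonneg.2 (hGw i), sub_nonneg.2 hFt⟩, by simp⟩
  · rintro ⟨_, ⟨y, hy, rfl⟩, ⟨k, kw, kt⟩, ⟨hk, hkw, hkt⟩, hsum⟩
    simp only [Prod.mk_add_mk, Prod.mk.injEq] at hsum hk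
    obtain ⟨rfl, rfl, rfl⟩ := hsum
    exact ⟨y, hy, by simp [Set.mem_singleton_iff.1 hk], fun i => le_add_of_nonneg_right (hkw i),
      le_add_of_nonneg_right hkt⟩

theorem exists_multipliers_lt_lagrangian [AddCommGroup V] [Module ℝ V] [TopologicalSpace V]
    [Fintype ι] [Fintype κ] {Y : Set V} (hYc : IsCompact Y) (hY : Convex ℝ Y)
    (A : V →L[ℝ] ι → ℝ) (c : ι → ℝ) {G : κ → V → ℝ} (hG : ∀ i, ConvexOn ℝ Y (G i))
    (hGc : ∀ i, ContinuousOn (G i) Y) {F : V → ℝ} (hF : ConvexOn ℝ Y F) (hFc : ContinuousOn F Y)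
    (hfeas : ∃ y ∈ Y, A y = c ∧ ∀ i, G i y ≤ 0) {r : ℝ}
    (hr : ∀ y ∈ Y, A y = c → (∀ i, G i y ≤ 0) → r < F y) :
    ∃ (lam : ι → ℝ) (mu : κ → ℝ), (∀ i, 0 ≤ mu i) ∧
      ∀ y ∈ Y, r < F y + lam ⬝ᵥ (A y - c) + ∑ i, mu i * G i y := by
  classical
  have hnot : ((0, 0, r) : (ι → ℝ) × (κ → ℝ) × ℝ) ∉ constraintImage Y (fun y => A y - c) G F := by
    rintro ⟨y, hy, hAy, hGy, hFy⟩
    exact (hr y hy (sub_eq_zero.1 hAy) hGy).not_ge hFy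
  obtain ⟨ψ, u, hψr, hψC⟩ := geometric_hahn_banach_point_closed
    (convex_constraintImage hY A c hG hF)
    (isClosed_constraintImage hYc ((A.continuous.sub continuous_const).continuousOn) hGc hFc) hnot
  set lamψ : ι → ℝ := fun i => ψ (Pi.single i 1, 0, 0)
  set muψ : κ → ℝ := fun i => ψ (0, Pi.single i 1, 0)
  set γ := ψ (0, 0, 1)
  have hψ : ∀ u' w t, ψ (u', w, t) = lamψ ⬝ᵥ u' + ∑ i, muψ i * w i + γ * t :=
    StrongDual.apply_eq_dotProduct_add ψ
  obtain ⟨y₁, hy₁, hAy₁, hGy₁⟩ := hfeas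
  have hγ : 0 < γ := by
    have := hψC (0, 0, F y₁) ⟨y₁, hy₁, by simp [hAy₁], hGy₁, le_rfl⟩
    simp only [hψ, dotProduct_zero, Pi.zero_apply, mul_zero, Finset.sum_const_zero, zero_add]
      at this hψr
    nlinarith [hr y₁ hy₁ hAy₁ hGy₁]
  have hmuψ : ∀ i, 0 ≤ muψ i := fun i =>
    nonneg_of_forall_lt_add_mul (u := u) (a := γ * F y₁) fun τ hτ => by
      have := hψC (0, τ • Pi.single i 1, F y₁)
        ⟨y₁, hy₁, by simp [hAy₁], fun j => (hGy₁ j).trans (by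
          by_cases hij : j = i <;> simp [hij, hτ]), le_rfl⟩
      simp [hψ, Pi.single_apply] at this
      linarith
  refine ⟨γ⁻¹ • lamψ, γ⁻¹ • muψ, fun i => mul_nonneg (inv_nonneg.2 hγ.le) (hmuψ i),
    fun y hy => ?_⟩
  have key := hψr.trans
    (hψC (A y - c, fun i => G i y, F y) ⟨y, hy, rfl, fun i => le_rfl, le_rfl⟩)
  simp only [hψ, dotProduct_zero, Pi.zero_apply, mul_zero, Finset.sum_const_zero, zero_add] at key
  rw [smul_dotProduct, smul_eq_mul]
  simp only [Pi.smul_apply, smul_eq_mul, mul_assoc, ← Finset.mul_sum]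
  rw [← mul_lt_mul_iff_of_pos_left hγ]
  field_simp
  linarith

end LagrangeDuality

theorem inner_toE_transpose_mulVec {k l : ℕ} (A : Matrix (Fin k) (Fin l) ℝ) (v : Fin k → ℝ)
    (y : E l) : ⟪toE (Aᵀ *ᵥ v), y⟫ = v ⬝ᵥ A *ᵥ y := by
  rw [EuclideanSpace.inner_eq_star_dotProduct, Matrix.dotProduct_mulVec, Matrix.mulVec_transpose,
    dotProduct_comm]
  rfl

section ValueFunction

variable {n m q p : ℕ} (A : Matrix (Fin q) (Fin n) ℝ) (B : Matrix (Fin q) (Fin m) ℝ)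
  (b : Fin q → ℝ)

def lagrangian (fr : E n × E m → ℝ) (gr : Fin p → E n × E m → ℝ) (lam : E q) (mu : E p)
    (z : E n × E m) : ℝ :=
  fr z + (lam : Fin q → ℝ) ⬝ᵥ (A *ᵥ z.1 + B *ᵥ z.2 - b) + ∑ i, mu i * gr i z

theorem dotProduct_mulVec_add_mulVec_sub (lam : Fin q → ℝ) (y : E n) (x : E m) :
    lam ⬝ᵥ (A *ᵥ y + B *ᵥ x - b) = ⟪toE (Aᵀ *ᵥ lam), y⟫ + ⟪toE (Bᵀ *ᵥ lam), x⟫ - lam ⬝ᵥ b := by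
  rw [inner_toE_transpose_mulVec, inner_toE_transpose_mulVec, dotProduct_sub, dotProduct_add]

variable {A B b} {fr : E n × E m → ℝ} {gr : Fin p → E n × E m → ℝ} {lam : E q} {mu : E p}

theorem lagrangian_le_of_feasible {y : E n} {x : E m} (hlin : A *ᵥ y + B *ᵥ x = b)
    (hg : ∀ i, gr i (y, x) ≤ 0) (hmu : ∀ i, 0 ≤ mu i) :
    lagrangian A B b fr gr lam mu (y, x) ≤ fr (y, x) := by
  have : ∑ i, mu i * gr i (y, x) ≤ 0 :=
    Finset.sum_nonpos fun i _ => mul_nonpos_of_nonneg_of_nonpos (hmu i) (hg i)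
  simpa [lagrangian, hlin] using this

theorem mul_eq_zero_of_le_lagrangian {y : E n} {x : E m} (hlin : A *ᵥ y + B *ᵥ x = b)
    (hg : ∀ i, gr i (y, x) ≤ 0) (hmu : ∀ i, 0 ≤ mu i)
    (hle : fr (y, x) ≤ lagrangian A B b fr gr lam mu (y, x)) (i : Fin p) :
    mu i * gr i (y, x) = 0 := by
  have hterm : ∀ j ∈ Finset.univ, mu j * gr j (y, x) ≤ 0 :=
    fun j _ => mul_nonpos_of_nonneg_of_nonpos (hmu j) (hg j)
  simp only [lagrangian, hlin, sub_self, dotProduct_zero, add_zero, le_add_iff_nonneg_right]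
    at hle
  exact (Finset.sum_eq_zero_iff_of_nonpos hterm).1
    (le_antisymm (Finset.sum_nonpos hterm) hle) i (Finset.mem_univ i)

theorem convexOn_lagrangian {Y : Set (E n)} {X : Set (E m)} (hf : ConvexOn ℝ (Y ×ˢ X) fr)
    (hg : ∀ i, ConvexOn ℝ (Y ×ˢ X) (gr i)) (hmu : ∀ i, 0 ≤ mu i) :
    ConvexOn ℝ (Y ×ˢ X) (lagrangian A B b fr gr lam mu) := by
  refine ⟨hf.1, fun z hz w hw a c ha hc hac => ?_⟩
  have hsum : ∑ i, mu i * gr i (a • z + c • w)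
      ≤ a * ∑ i, mu i * gr i z + c * ∑ i, mu i * gr i w := by
    rw [Finset.mul_sum, Finset.mul_sum, ← Finset.sum_add_distrib]
    refine Finset.sum_le_sum fun i _ => ?_
    have := mul_le_mul_of_nonneg_left ((hg i).2 hz hw ha hc hac) (hmu i)
    simp only [smul_eq_mul] at this
    linarith
  have haff : (lam : Fin q → ℝ) ⬝ᵥ (A *ᵥ (a • z + c • w).1 + B *ᵥ (a • z + c • w).2 - b)
      = a * (lam : Fin q → ℝ) ⬝ᵥ (A *ᵥ z.1 + B *ᵥ z.2 - b)
        + c * (lam : Fin q → ℝ) ⬝ᵥ (A *ᵥ w.1 + B *ᵥ w.2 - b) := by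
    simp only [dotProduct_mulVec_add_mulVec_sub, Prod.fst_add, Prod.snd_add, Prod.smul_fst,
      Prod.smul_snd, inner_add_right, real_inner_smul_right]
    linear_combination ((lam : Fin q → ℝ) ⬝ᵥ b) * hac
  have := (hf.2 hz hw ha hc hac)
  simp only [lagrangian, smul_eq_mul] at this ⊢
  rw [haff]
  linarith

theorem differentiableAt_lagrangian {z : E n × E m} (hf : DifferentiableAt ℝ fr z)
    (hg : ∀ i, DifferentiableAt ℝ (gr i) z) :
    DifferentiableAt ℝ (lagrangian A B b fr gr lam mu) z := by
  unfold lagrangian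
  simp only [dotProduct_mulVec_add_mulVec_sub]
  exact (hf.add ((((innerSL ℝ _).comp (.fst ℝ _ _)).differentiableAt.add
    ((innerSL ℝ _).comp (.snd ℝ _ _)).differentiableAt).sub_const _)).add
    (DifferentiableAt.fun_sum fun i _ => (hg i).const_mul _)

theorem hasGradientAt_lagrangian_snd {y : E n} {x : E m} (hf : DifferentiableAt ℝ fr (y, x))
    (hg : ∀ i, DifferentiableAt ℝ (gr i) (y, x)) :
    HasGradientAt (fun x' => lagrangian A B b fr gr lam mu (y, x'))
      (gradient (fun x' => fr (y, x')) x + toE (Bᵀ *ᵥ lam)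
        + ∑ i, mu i • gradient (fun x' => gr i (y, x')) x) x := by
  have hpartial : ∀ {F : E n × E m → ℝ}, DifferentiableAt ℝ F (y, x) →
      HasFDerivAt (fun x' => F (y, x')) (fderiv ℝ (fun x' => F (y, x')) x) x :=
    fun hF => (hF.comp x (differentiableAt_const y |>.prodMk differentiableAt_id)).hasFDerivAt
  rw [hasGradientAt_iff_hasFDerivAt]
  simp only [map_add, map_sum, map_smul, toDual_gradient, lagrangian,
    dotProduct_mulVec_add_mulVec_sub]
  exact ((hpartial hf).add (((innerSL ℝ _).hasFDerivAt.const_add _).sub_const _)).add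
    (HasFDerivAt.fun_sum fun i _ => (hpartial (hg i)).const_mul (mu i))

variable {X : Set (E m)} {Y : Set (E n)} {f : E n × E m → EReal} {g : Fin p → E n × E m → EReal}

theorem Qvar_le {x : E m} {y : E n} (hy : y ∈ Y) (hlin : A *ᵥ y + B *ᵥ x = b)
    (hg : ∀ i, g i (y, x) ≤ 0) : Qvar Y A B b f g x ≤ f (y, x) :=
  iInf₂_le_of_le y hy (iInf₂_le hlin hg)

theorem le_Qvar {x : E m} {c : EReal}
    (h : ∀ y ∈ Y, A *ᵥ y + B *ᵥ x = b → (∀ i, g i (y, x) ≤ 0) → c ≤ f (y, x)) :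
    c ≤ Qvar Y A B b f g x :=
  le_iInf₂ fun y hy => le_iInf₂ (h y hy)

theorem coe_le_thetaVar_iff (hfr : ∀ z ∈ Y ×ˢ X, f z = fr z)
    (hgr : ∀ i, ∀ z ∈ Y ×ˢ X, g i z = gr i z) {x : E m} (hx : x ∈ X) {c : ℝ} :
    (c : EReal) ≤ thetaVar Y A B b f g x lam mu ↔
      ∀ y ∈ Y, c ≤ lagrangian A B b fr gr lam mu (y, x) := by
  simp only [thetaVar, le_iInf_iff]
  refine forall₂_congr fun y hy => ?_
  rw [← EReal.coe_le_coe_iff]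
  simp only [lagrangian, hfr (y, x) ⟨hy, hx⟩, fun i => hgr i (y, x) ⟨hy, hx⟩, EReal.coe_add,
    EReal.coe_finset_sum, EReal.coe_mul]

theorem coe_le_thetaVar (hYc : IsCompact Y) (hY : Convex ℝ Y) (hX : Convex ℝ X)
    (hfconv : EConvexOn f) (hgconv : ∀ i, EConvexOn (g i))
    (hfr : ∀ z ∈ Y ×ˢ X, f z = fr z) (hgr : ∀ i, ∀ z ∈ Y ×ˢ X, g i z = gr i z)
    (hfc : ∀ z ∈ Y ×ˢ X, ContinuousAt fr z) (hgc : ∀ i, ∀ z ∈ Y ×ˢ X, ContinuousAt (gr i) z)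
    {xb : E m} (hxb : xb ∈ X) {lamb : E q} {mub : E p}
    (hdualopt : ∀ (lam : E q) (mu : E p), (∀ i, 0 ≤ mu i) →
      thetaVar Y A B b f g xb lam mu ≤ thetaVar Y A B b f g xb lamb mub)
    {yb : E n} (hybY : yb ∈ Y) (hyblin : A *ᵥ yb + B *ᵥ xb = b)
    (hybg : ∀ i, gr i (yb, xb) ≤ 0) (hybopt : f (yb, xb) = Qvar Y A B b f g xb) :
    (fr (yb, xb) : EReal) ≤ thetaVar Y A B b f g xb lamb mub := by
  have hS : Convex ℝ (Y ×ˢ X) := hY.prod hX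
  have hslice : ∀ {F : E n × E m → ℝ}, (∀ z ∈ Y ×ˢ X, ContinuousAt F z) →
      ContinuousOn (fun y => F (y, xb)) Y := fun hF y hy =>
    ((hF _ ⟨hy, hxb⟩).comp (continuous_id.prodMk continuous_const).continuousAt).continuousWithinAt
  let Aℓ : E n →L[ℝ] Fin q → ℝ := (Matrix.toLin' A).toContinuousLinearMap ∘L
    (EuclideanSpace.equiv (Fin n) ℝ).toContinuousLinearMap
  have hAℓ : ∀ y, Aℓ y - (b - B *ᵥ xb) = A *ᵥ y + B *ᵥ xb - b := fun y => sub_sub_eq_add_sub ..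
  refine EReal.ge_of_forall_gt_iff_ge.1 fun r hr => ?_
  obtain ⟨lam, mu, hmu, hlt⟩ := exists_multipliers_lt_lagrangian hYc hY Aℓ (b - B *ᵥ xb)
    (fun i => ((hgconv i).convexOn_of_eqOn hS (hgr i)).comp_prodMk_const hY hxb)
    (fun i => hslice (hgc i)) ((hfconv.convexOn_of_eqOn hS hfr).comp_prodMk_const hY hxb)
    (hslice hfc) ⟨yb, hybY, eq_sub_of_add_eq hyblin, hybg⟩ (r := r) fun y hy hlin hg => by
      have hQ : (fr (yb, xb) : EReal) ≤ fr (y, xb) := by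
        rw [← hfr _ ⟨hybY, hxb⟩, ← hfr _ ⟨hy, hxb⟩, hybopt]
        refine Qvar_le hy (eq_sub_iff_add_eq.1 hlin) fun i => ?_
        rw [hgr i _ ⟨hy, hxb⟩]
        exact EReal.coe_nonpos.2 (hg i)
      exact EReal.coe_lt_coe_iff.1 (hr.trans_le hQ)
  calc (r : EReal) ≤ thetaVar Y A B b f g xb (toE lam) (toE mu) :=
        (coe_le_thetaVar_iff hfr hgr hxb).2 fun y hy => by
          simpa [lagrangian, toE, hAℓ] using (hlt y hy).le
    _ ≤ thetaVar Y A B b f g xb lamb mub := hdualopt _ _ hmu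

end ValueFunction

theorem exact_cut_value_function_general
    {n m q p : ℕ} (X : Set (E m)) (Y : Set (E n))
    (hXcv : Convex ℝ X)
    (hYcp : IsCompact Y) (hYcv : Convex ℝ Y)
    (A : Matrix (Fin q) (Fin n) ℝ) (B : Matrix (Fin q) (Fin m) ℝ) (b : Fin q → ℝ)
    -- (H1): f proper convex lower semicontinuous
    (f : E n × E m → EReal)
    (hfconv : EConvexOn f)
    -- (H2): each gᵢ convex lower semicontinuous (with values in ℝ ∪ {+∞})
    (g : Fin p → E n × E m → EReal)
    (hgconv : ∀ i, EConvexOn (g i))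
    -- f and g are differentiable (finite, real-valued with differentiable
    -- representations fr, gr) on Y × X
    (fr : E n × E m → ℝ) (gr : Fin p → E n × E m → ℝ)
    (hfr : ∀ pt ∈ Y ×ˢ X, f pt = ((fr pt : ℝ) : EReal))
    (hgr : ∀ i, ∀ pt ∈ Y ×ˢ X, g i pt = ((gr i pt : ℝ) : EReal))
    (hfrdiff : ∀ pt ∈ Y ×ˢ X, DifferentiableAt ℝ fr pt)
    (hgrdiff : ∀ i, ∀ pt ∈ Y ×ˢ X, DifferentiableAt ℝ (gr i) pt)
    (xb : E m) (hxb : xb ∈ X)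
    -- (λ̄, μ̄): optimal solution of the dual problem at x̄
    (lamb : E q) (mub : E p) (hmub : ∀ i, 0 ≤ mub i)
    (hdualopt : ∀ (lam : E q) (mu : E p), (∀ i, 0 ≤ mu i) →
      thetaVar Y A B b f g xb lam mu ≤ thetaVar Y A B b f g xb lamb mub)
    -- ȳ: an element of the primal solution set Sol(x̄)
    (yb : E n) (hybY : yb ∈ Y) (hyblin : A.mulVec yb + B.mulVec xb = b)
    (hybg : ∀ i, g i (yb, xb) ≤ (0 : EReal))
    (hybopt : f (yb, xb) = Qvar Y A B b f g xb) :
    ∀ x ∈ X,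
      Qvar Y A B b f g xb +
        ((⟪gradient (fun x' => fr (yb, x')) xb + toE (Bᵀ.mulVec lamb)
            + ∑ i, (if g i (yb, xb) = (0 : EReal) then mub i else 0)
                • gradient (fun x' => gr i (yb, x')) xb,
            x - xb⟫ : ℝ) : EReal)
        ≤ Qvar Y A B b f g x := by
  intro x hx
  have hzb : (yb, xb) ∈ Y ×ˢ X := ⟨hybY, hxb⟩
  have hgyb : ∀ i, gr i (yb, xb) ≤ 0 := fun i => EReal.coe_nonpos.1 (hgr i _ hzb ▸ hybg i)
  have hmin := (coe_le_thetaVar_iff hfr hgr hxb).1 <| coe_le_thetaVar hYcp hYcv hXcv hfconv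
    hgconv hfr hgr (fun z hz => (hfrdiff z hz).continuousAt)
    (fun i z hz => (hgrdiff i z hz).continuousAt) hxb hdualopt hybY hyblin hgyb hybopt
  have hcs := mul_eq_zero_of_le_lagrangian hyblin hgyb hmub (hmin yb hybY)
  have hLb : lagrangian A B b fr gr lamb mub (yb, xb) = fr (yb, xb) := by
    simp [lagrangian, hyblin, hcs]
  have hactive : ∀ i, (if g i (yb, xb) = (0 : EReal) then mub i else 0) = mub i := fun i => by
    rcases mul_eq_zero.1 (hcs i) with h | h <;> simp [hgr i _ hzb, h]
  have hL : ConvexOn ℝ (Y ×ˢ X) (lagrangian A B b fr gr lamb mub) :=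
    convexOn_lagrangian (hfconv.convexOn_of_eqOn (hYcv.prod hXcv) hfr)
      (fun i => (hgconv i).convexOn_of_eqOn (hYcv.prod hXcv) (hgr i)) hmub
  simp only [hactive]
  rw [← hybopt, hfr _ hzb]
  refine le_Qvar fun y hy hlin hg => ?_
  rw [hfr _ ⟨hy, hx⟩, ← EReal.coe_add, EReal.coe_le_coe_iff, ← hLb,
    ← (hasGradientAt_lagrangian_snd (hfrdiff _ hzb) (hgrdiff · _ hzb)).fderiv_apply]
  calc _ ≤ lagrangian A B b fr gr lamb mub (y, x) :=
        hL.add_fderiv_snd_le_of_isMinOn hYcv hybY hxb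
          (isMinOn_iff.2 fun y hy => hLb.trans_le (hmin y hy))
          (differentiableAt_lagrangian (hfrdiff _ hzb) (hgrdiff · _ hzb)) hy hx
    _ ≤ fr (y, x) := lagrangian_le_of_feasible hlin
        (fun i => EReal.coe_nonpos.1 (hgr i (y, x) ⟨hy, hx⟩ ▸ hg i)) hmub

/-- Exact cut for the value function of a convex problem with variable feasible set:
with `ȳ` a primal optimal solution and `(λ̄, μ̄)` a dual optimal solution at `x̄`, the vector
`s(x̄) = ∇_x f(ȳ, x̄) + Bᵀλ̄ + Σ_{i ∈ I(ȳ, x̄)} μ̄ᵢ ∇_x gᵢ(ȳ, x̄)` is a subgradient of `𝒬`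
at `x̄`: `𝒬(x) ≥ 𝒬(x̄) + ⟨s(x̄), x − x̄⟩` for all `x ∈ X`. -/
theorem exact_cut_value_function
    {n m q p : ℕ} (X : Set (E m)) (Y : Set (E n))
    (hXne : X.Nonempty) (hXcp : IsCompact X) (hXcv : Convex ℝ X)
    (hYne : Y.Nonempty) (hYcp : IsCompact Y) (hYcv : Convex ℝ Y)
    (A : Matrix (Fin q) (Fin n) ℝ) (B : Matrix (Fin q) (Fin m) ℝ) (b : Fin q → ℝ)
    -- (H1): f proper convex lower semicontinuous
    (f : E n × E m → EReal)
    (hfbot : ∀ pt, f pt ≠ ⊥) (hfproper : ∃ pt, f pt ≠ ⊤)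
    (hfconv : EConvexOn f) (hflsc : LowerSemicontinuous f)
    -- (H2): each gᵢ convex lower semicontinuous (with values in ℝ ∪ {+∞})
    (g : Fin p → E n × E m → EReal)
    (hgbot : ∀ i pt, g i pt ≠ ⊥)
    (hgconv : ∀ i, EConvexOn (g i)) (hglsc : ∀ i, LowerSemicontinuous (g i))
    -- f and g are differentiable (finite, real-valued with differentiable
    -- representations fr, gr) on Y × X
    (fr : E n × E m → ℝ) (gr : Fin p → E n × E m → ℝ)
    (hfr : ∀ pt ∈ Y ×ˢ X, f pt = ((fr pt : ℝ) : EReal))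
    (hgr : ∀ i, ∀ pt ∈ Y ×ˢ X, g i pt = ((gr i pt : ℝ) : EReal))
    (hfrdiff : ∀ pt ∈ Y ×ˢ X, DifferentiableAt ℝ fr pt)
    (hgrdiff : ∀ i, ∀ pt ∈ Y ×ˢ X, DifferentiableAt ℝ (gr i) pt)
    (xb : E m) (hxb : xb ∈ X)
    -- nonempty feasible set at x̄ and constraint qualification (Slater at x̄)
    (y₀ : E n) (hy₀Y : y₀ ∈ intrinsicInterior ℝ Y)
    (hy₀g : y₀ ∈ intrinsicInterior ℝ {y : E n | ∀ i, g i (y, xb) ≤ (0 : EReal)})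
    (hy₀lin : A.mulVec y₀ + B.mulVec xb = b)
    -- (λ̄, μ̄): optimal solution of the dual problem at x̄
    (lamb : E q) (mub : E p) (hmub : ∀ i, 0 ≤ mub i)
    (hdualopt : ∀ (lam : E q) (mu : E p), (∀ i, 0 ≤ mu i) →
      thetaVar Y A B b f g xb lam mu ≤ thetaVar Y A B b f g xb lamb mub)
    -- ȳ: an element of the primal solution set Sol(x̄)
    (yb : E n) (hybY : yb ∈ Y) (hyblin : A.mulVec yb + B.mulVec xb = b)
    (hybg : ∀ i, g i (yb, xb) ≤ (0 : EReal))
    (hybopt : f (yb, xb) = Qvar Y A B b f g xb) :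
    ∀ x ∈ X,
      Qvar Y A B b f g xb +
        ((⟪gradient (fun x' => fr (yb, x')) xb + toE (Bᵀ.mulVec lamb)
            + ∑ i, (if g i (yb, xb) = (0 : EReal) then mub i else 0)
                • gradient (fun x' => gr i (yb, x')) xb,
            x - xb⟫ : ℝ) : EReal)
        ≤ Qvar Y A B b f g x :=
  exact_cut_value_function_general X Y hXcv hYcp hYcv A B b f hfconv g hgconv fr gr hfr hgr hfrdiff
    hgrdiff xb hxb lamb mub hmub hdualopt yb hybY hyblin hybg hybopt
end
end

section
/- Let X ⊆ ℝ^m and Y ⊆ ℝ^n be nonempty compact convex sets and let f : ℝ^n × ℝ^m → ℝ be convex and differentiable on Y × X. Define 𝒬(x) = inf_{y ∈ Y} f(y, x). Fix x̄ ∈ X and ε ≥ 0 and assume: (H3) f(·, x̄) is strongly convex on Y with constant α(x̄) > 0 with respect to ‖·‖₂; (H4) there is M₁(x̄) ≥ 0 with ‖∇_x f(y₂, x̄) − ∇_x f(y₁, x̄)‖₂ ≤ M₁(x̄)‖y₂ − y₁‖₂ for all y₁, y₂ ∈ Y. Let ŷ ∈ Y satisfy f(ŷ, x̄) ≤ 𝒬(x̄)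 + ε and set η(ε, x̄) = ε + M₁(x̄) · Diam(X) · sqrt(2ε/α(x̄)), where Diam(X) = max_{x₁, x₂ ∈ X} ‖x₂ − x₁‖₂. Then the affine function C(x) = f(ŷ, x̄) − η(ε, x̄) + ⟨∇_x f(ŷ, x̄), x − x̄⟩ satisfies 𝒬(x) ≥ C(x) for every x ∈ X, and 𝒬(x̄) − C(x̄) ≤ η(ε, x̄). -/
/-! Let `ȳ` minimize `f(·, x̄)` on `Y`. First-order optimality `⟪∇_y f(ȳ, x̄), y - ȳ⟫ ≥ 0` combined
with the gradient inequality for the convex `f` gives the exact cut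
`𝒬(x) ≥ f(ȳ, x̄) + ⟪∇_x f(ȳ, x̄), x - x̄⟫`, and combined with strong convexity it gives
`‖ŷ - ȳ‖ ≤ √(2ε/α)`. Replacing `ȳ` by `ŷ` then costs `ε` in the constant term and, by (H4), at
most `M₁ · ‖ŷ - ȳ‖ · Diam(X)` in the linear term. -/

open scoped RealInnerProductSpace Matrix
noncomputable section

/-- The value function `𝒬(x) = inf_{y ∈ Y} f(y, x)` (as an extended real). -/
def Qfix {n m : ℕ} (Y : Set (E n)) (f : E n × E m → ℝ) (x : E m) : EReal :=
  ⨅ (y : E n) (_ : y ∈ Y), ((f (y, x) : ℝ) : EReal)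

theorem ConvexOn.add_fderiv_sub_le_s12 {V : Type*} [NormedAddCommGroup V] [NormedSpace ℝ V]
    {s : Set V} {f : V → ℝ} (hf : ConvexOn ℝ s f) {p q : V}
    (hp : p ∈ s) (hq : q ∈ s) (hd : DifferentiableAt ℝ f p) :
    f p + fderiv ℝ f p (q - p) ≤ f q := by
  let l : ℝ →ᵃ[ℝ] V := AffineMap.lineMap p q
  have hl0 : l 0 = p := AffineMap.lineMap_apply_zero p q
  have hl1 : l 1 = q := AffineMap.lineMap_apply_one p q
  have hφ : HasDerivAt (f ∘ l) (fderiv ℝ f p (q - p)) 0 :=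
    hd.hasFDerivAt.comp_hasDerivAt_of_eq 0 AffineMap.hasDerivAt_lineMap hl0.symm
  have hslope := (hf.comp_affineMap l).le_slope_of_hasDerivAt
    (show l 0 ∈ s from hl0 ▸ hp) (show l 1 ∈ s from hl1 ▸ hq) one_pos hφ
  rw [slope_def_field, Function.comp_apply, Function.comp_apply, hl0, hl1, sub_zero,
    div_one] at hslope
  linarith

theorem DifferentiableAt.comp_prodMk_left {U V : Type*} [NormedAddCommGroup U] [NormedSpace ℝ U]
    [NormedAddCommGroup V] [NormedSpace ℝ V] {f : U × V → ℝ} {y : U} {x : V}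
    (hd : DifferentiableAt ℝ f (y, x)) : DifferentiableAt ℝ (fun y' => f (y', x)) y :=
  hd.comp y (hasFDerivAt_prodMk_left y x).differentiableAt

section Gradient

variable {F G : Type*} [NormedAddCommGroup F] [InnerProductSpace ℝ F] [CompleteSpace F]
  [NormedAddCommGroup G] [InnerProductSpace ℝ G] [CompleteSpace G]

theorem IsMinOn.inner_gradient_sub_nonneg {s : Set F} {g : F → ℝ} {p q : F}
    (hmin : IsMinOn g s p) (hs : Convex ℝ s) (hp : p ∈ s) (hq : q ∈ s)
    (hd : DifferentiableAt ℝ g p) : 0 ≤ ⟪gradient g p, q - p⟫ := by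
  rw [inner_gradient_left]
  exact hmin.localize.hasFDerivWithinAt_nonneg hd.hasFDerivAt.hasFDerivWithinAt
    (sub_mem_posTangentConeAt_of_segment_subset (hs.segment_subset hp hq))

theorem fderiv_prod_apply_eq_inner_gradient {f : F × G → ℝ} {y : F} {x : G}
    (hd : DifferentiableAt ℝ f (y, x)) (v : F) (w : G) :
    fderiv ℝ f (y, x) (v, w) =
      ⟪gradient (fun y' => f (y', x)) y, v⟫ + ⟪gradient (fun x' => f (y, x')) x, w⟫ := by
  have hy : HasFDerivAt (fun y' => f (y', x))
      ((fderiv ℝ f (y, x)).comp (.inl ℝ F G)) y :=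
    hd.hasFDerivAt.comp y (hasFDerivAt_prodMk_left y x)
  have hx : HasFDerivAt (fun x' => f (y, x'))
      ((fderiv ℝ f (y, x)).comp (.inr ℝ F G)) x :=
    hd.hasFDerivAt.comp x (hasFDerivAt_prodMk_right y x)
  rw [inner_gradient_left, inner_gradient_left, hy.fderiv, hx.fderiv]
  simp [← map_add]

theorem IsMinOn.norm_sub_le_sqrt_of_le_add {s : Set F} {g : F → ℝ} {p q : F} {α ε : ℝ}
    (hmin : IsMinOn g s p) (hs : Convex ℝ s) (hp : p ∈ s) (hq : q ∈ s)
    (hd : DifferentiableAt ℝ g p) (hα : 0 < α)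
    (hsc : g p + ⟪gradient g p, q - p⟫ + α / 2 * ‖q - p‖ ^ 2 ≤ g q) (hq_opt : g q ≤ g p + ε) :
    ‖q - p‖ ≤ √(2 * ε / α) := by
  have hopt := hmin.inner_gradient_sub_nonneg hs hp hq hd
  apply Real.le_sqrt_of_sq_le
  rw [le_div_iff₀ hα]
  linarith

theorem IsMinOn.add_inner_gradient_le {Y : Set F} {X : Set G} {f : F × G → ℝ}
    (hconv : ConvexOn ℝ (Y ×ˢ X) f) (hY : Convex ℝ Y) {yb y : F} {xb x : G}
    (hmin : IsMinOn (fun y' => f (y', xb)) Y yb) (hyb : yb ∈ Y) (hxb : xb ∈ X)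
    (hd : DifferentiableAt ℝ f (yb, xb)) (hy : y ∈ Y) (hx : x ∈ X) :
    f (yb, xb) + ⟪gradient (fun x' => f (yb, x')) xb, x - xb⟫ ≤ f (y, x) := by
  have hsub := hconv.add_fderiv_sub_le_s12 (p := (yb, xb)) (q := (y, x)) ⟨hyb, hxb⟩ ⟨hy, hx⟩ hd
  rw [Prod.mk_sub_mk, fderiv_prod_apply_eq_inner_gradient hd] at hsub
  have hopt := hmin.inner_gradient_sub_nonneg hY hyb hy hd.comp_prodMk_left
  linarith

end Gradient

section ValueFunction

variable {n m : ℕ} {Y : Set (E n)} {f : E n × E m → ℝ} {x : E m}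

theorem le_Qfix {c : ℝ} (h : ∀ y ∈ Y, c ≤ f (y, x)) : (c : EReal) ≤ Qfix Y f x :=
  le_iInf₂ fun y hy => EReal.coe_le_coe (h y hy)

theorem Qfix_le {y : E n} (hy : y ∈ Y) : Qfix Y f x ≤ f (y, x) :=
  iInf₂_le y hy

theorem IsMinOn.Qfix_eq {y : E n} (hmin : IsMinOn (fun y' => f (y', x)) Y y) (hy : y ∈ Y) :
    Qfix Y f x = f (y, x) :=
  (Qfix_le hy).antisymm (le_Qfix fun _ hy' => isMinOn_iff.mp hmin _ hy')

end ValueFunction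

theorem inexact_cut_fixed_feasible_set_strongly_convex_general
    {n m : ℕ} (X : Set (E m)) (Y : Set (E n))
    (hYcp : IsCompact Y) (hYcv : Convex ℝ Y)
    (f : E n × E m → ℝ)
    (hconv : ConvexOn ℝ (Y ×ˢ X) f)
    (hdiff : ∀ pt ∈ Y ×ˢ X, DifferentiableAt ℝ f pt)
    (xb : E m) (hxb : xb ∈ X)
    (ε : ℝ)
    -- (H3): strong convexity of f(·, x̄) on Y with constant α(x̄) > 0
    (α : ℝ) (hα : 0 < α)
    (hsc : ∀ y₁ ∈ Y, ∀ y₂ ∈ Y,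
      f (y₁, xb) + ⟪gradient (fun y => f (y, xb)) y₁, y₂ - y₁⟫ + α / 2 * ‖y₂ - y₁‖ ^ 2
        ≤ f (y₂, xb))
    -- (H4): Lipschitz dependence of ∇ₓf(y, x̄) on y, with constant M₁(x̄) ≥ 0
    (M₁ : ℝ) (hM₁ : 0 ≤ M₁)
    (hlip : ∀ y₁ ∈ Y, ∀ y₂ ∈ Y,
      ‖gradient (fun x => f (y₂, x)) xb - gradient (fun x => f (y₁, x)) xb‖
        ≤ M₁ * ‖y₂ - y₁‖)
    -- Diam(X)
    (D : ℝ) (hD : IsGreatest ((fun pr : E m × E m => ‖pr.2 - pr.1‖) '' (X ×ˢ X)) D)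
    -- ε-optimal solution
    (yh : E n) (hyh : yh ∈ Y)
    (hepsopt : ((f (yh, xb) : ℝ) : EReal) ≤ Qfix Y f xb + (ε : EReal)) :
    (∀ x ∈ X,
      ((f (yh, xb) - (ε + M₁ * D * Real.sqrt (2 * ε / α))
          + ⟪gradient (fun x' => f (yh, x')) xb, x - xb⟫ : ℝ) : EReal)
        ≤ Qfix Y f x) ∧
    Qfix Y f xb ≤
      ((f (yh, xb) - (ε + M₁ * D * Real.sqrt (2 * ε / α))
          + ⟪gradient (fun x' => f (yh, x')) xb, xb - xb⟫
          + (ε + M₁ * D * Real.sqrt (2 * ε / α)) : ℝ) : EReal) := by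
  have hdiff_y : ∀ y ∈ Y, DifferentiableAt ℝ f (y, xb) := fun y hy => hdiff _ ⟨hy, hxb⟩
  obtain ⟨yb, hyb, hmin⟩ := hYcp.exists_isMinOn ⟨yh, hyh⟩ fun y hy =>
    (hdiff_y y hy).comp_prodMk_left.continuousAt.continuousWithinAt
  have hyh_opt : f (yh, xb) ≤ f (yb, xb) + ε := by
    rw [hmin.Qfix_eq hyb] at hepsopt
    exact_mod_cast hepsopt
  have hdist : ‖yh - yb‖ ≤ √(2 * ε / α) :=
    hmin.norm_sub_le_sqrt_of_le_add hYcv hyb hyh (hdiff_y yb hyb).comp_prodMk_left hα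
      (hsc yb hyb yh hyh) hyh_opt
  refine ⟨fun x hx => le_Qfix fun y hy => ?_, (Qfix_le hyh).trans ?_⟩
  · set gh := gradient (fun x' => f (yh, x')) xb
    set gb := gradient (fun x' => f (yb, x')) xb
    have hgrad : ⟪gh, x - xb⟫ ≤ ⟪gb, x - xb⟫ + M₁ * D * √(2 * ε / α) :=
      calc ⟪gh, x - xb⟫ = ⟪gb, x - xb⟫ + ⟪gh - gb, x - xb⟫ := by rw [inner_sub_left]; ring
        _ ≤ ⟪gb, x - xb⟫ + ‖gh - gb‖ * ‖x - xb‖ := by gcongr; exact real_inner_le_norm _ _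
        _ ≤ ⟪gb, x - xb⟫ + M₁ * √(2 * ε / α) * D := by
          gcongr
          · exact (hlip yb hyb yh hyh).trans (by gcongr)
          · exact hD.2 ⟨(xb, x), ⟨hxb, hx⟩, rfl⟩
        _ = ⟪gb, x - xb⟫ + M₁ * D * √(2 * ε / α) := by ring
    have hcut := hmin.add_inner_gradient_le hconv hYcv hyb hxb (hdiff_y yb hyb) hy hx
    linarith
  · simp

/-- Inexact cut with fixed feasible set under strong convexity (H3) and Lipschitz dependence of
`∇_x f` on `y` (H4): with `η(ε, x̄) = ε + M₁(x̄)·Diam(X)·√(2ε/α(x̄))`, the affine function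
`C(x) = f(ŷ, x̄) − η(ε, x̄) + ⟨∇_x f(ŷ, x̄), x − x̄⟩` satisfies `𝒬(x) ≥ C(x)` on `X` and
`𝒬(x̄) − C(x̄) ≤ η(ε, x̄)`. -/
theorem inexact_cut_fixed_feasible_set_strongly_convex
    {n m : ℕ} (X : Set (E m)) (Y : Set (E n))
    (hXne : X.Nonempty) (hXcp : IsCompact X) (hXcv : Convex ℝ X)
    (hYne : Y.Nonempty) (hYcp : IsCompact Y) (hYcv : Convex ℝ Y)
    (f : E n × E m → ℝ)
    (hconv : ConvexOn ℝ (Y ×ˢ X) f)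
    (hdiff : ∀ pt ∈ Y ×ˢ X, DifferentiableAt ℝ f pt)
    (xb : E m) (hxb : xb ∈ X)
    (ε : ℝ) (hε : 0 ≤ ε)
    -- (H3): strong convexity of f(·, x̄) on Y with constant α(x̄) > 0
    (α : ℝ) (hα : 0 < α)
    (hsc : ∀ y₁ ∈ Y, ∀ y₂ ∈ Y,
      f (y₁, xb) + ⟪gradient (fun y => f (y, xb)) y₁, y₂ - y₁⟫ + α / 2 * ‖y₂ - y₁‖ ^ 2
        ≤ f (y₂, xb))
    -- (H4): Lipschitz dependence of ∇ₓf(y, x̄) on y, with constant M₁(x̄) ≥ 0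
    (M₁ : ℝ) (hM₁ : 0 ≤ M₁)
    (hlip : ∀ y₁ ∈ Y, ∀ y₂ ∈ Y,
      ‖gradient (fun x => f (y₂, x)) xb - gradient (fun x => f (y₁, x)) xb‖
        ≤ M₁ * ‖y₂ - y₁‖)
    -- Diam(X)
    (D : ℝ) (hD : IsGreatest ((fun pr : E m × E m => ‖pr.2 - pr.1‖) '' (X ×ˢ X)) D)
    -- ε-optimal solution
    (yh : E n) (hyh : yh ∈ Y)
    (hepsopt : ((f (yh, xb) : ℝ) : EReal) ≤ Qfix Y f xb + (ε : EReal)) :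
    (∀ x ∈ X,
      ((f (yh, xb) - (ε + M₁ * D * Real.sqrt (2 * ε / α))
          + ⟪gradient (fun x' => f (yh, x')) xb, x - xb⟫ : ℝ) : EReal)
        ≤ Qfix Y f x) ∧
    Qfix Y f xb ≤
      ((f (yh, xb) - (ε + M₁ * D * Real.sqrt (2 * ε / α))
          + ⟪gradient (fun x' => f (yh, x')) xb, xb - xb⟫
          + (ε + M₁ * D * Real.sqrt (2 * ε / α)) : ℝ) : EReal) :=
  inexact_cut_fixed_feasible_set_strongly_convex_general X Y hYcp hYcv f hconv hdiff xb hxb ε α hα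
    hsc M₁ hM₁ hlip D hD yh hyh hepsopt
end
end
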